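/- arXiv:2503.05553 — 2 statements merged into one kernel-verified Lean document; each statement's English description precedes it below -/
import Mathlib

section
/- Let A, B, C, D be complex g×g matrices forming a symplectic block matrix [[A,B],[C,D]] (so Aᵀ·D − Cᵀ·B = I and Aᵀ·C, Bᵀ·D are symmetric), and let Ω be a symmetric complex g×g matrix with M := C·Ω + D invertible. Then the matrix M⁻¹·C is symmetric. -/
open Matrix

/-- From the symplectic conditions, `C·Dᵀ = D·Cᵀ`. -/
lemma CD_symm {g : ℕ} (A B C D : Matrix (Fin g) (Fin g) ℂ)
    (h1 : Aᵀ * D - Cᵀ * B = 1)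
    (hAC : (Aᵀ * C)ᵀ = Aᵀ * C)
    (hBD : (Bᵀ * D)ᵀ = Bᵀ * D) :
    C * Dᵀ = D * Cᵀ := by
  have h1t : Dᵀ * A - Bᵀ * C = 1 := by
    have := congrArg Matrix.transpose h1
    simpa [transpose_sub, transpose_mul] using this
  have hDB : Dᵀ * B = Bᵀ * D := by simpa [transpose_mul] using hBD
  have hCA : Cᵀ * A = Aᵀ * C := by simpa [transpose_mul] using hAC
  have e11 : Dᵀ * A + -Bᵀ * C = 1 := by
    linear_combination (norm := noncomm_ring) h1t
  have e12 : Dᵀ * B + -Bᵀ * D = 0 := by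
    linear_combination (norm := noncomm_ring) hDB
  have e21 : -Cᵀ * A + Aᵀ * C = 0 := by
    linear_combination (norm := noncomm_ring) -hCA
  have e22 : -Cᵀ * B + Aᵀ * D = 1 := by
    linear_combination (norm := noncomm_ring) h1
  have hKN : (fromBlocks Dᵀ (-Bᵀ) (-Cᵀ) Aᵀ) * (fromBlocks A B C D) = 1 := by
    rw [fromBlocks_multiply, e11, e12, e21, e22, fromBlocks_one]
  have hNK : (fromBlocks A B C D) * (fromBlocks Dᵀ (-Bᵀ) (-Cᵀ) Aᵀ) = 1 :=
    mul_eq_one_comm.mp hKN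
  rw [fromBlocks_multiply, ← fromBlocks_one] at hNK
  have h21 := congrArg Matrix.toBlocks₂₁ hNK
  rw [toBlocks_fromBlocks₂₁, toBlocks_fromBlocks₂₁] at h21
  linear_combination (norm := noncomm_ring) h21

/-- For a symplectic block matrix (`Aᵀ·D − Cᵀ·B = I`, `Aᵀ·C` and `Bᵀ·D` symmetric)
and a symmetric `Ω` with `M = C·Ω + D` invertible, the matrix `M⁻¹·C` is
symmetric. -/
theorem NC_symmetric {g : ℕ}
    (A B C D Ω : Matrix (Fin g) (Fin g) ℂ)
    (h1 : Aᵀ * D - Cᵀ * B = 1)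
    (hAC : (Aᵀ * C)ᵀ = Aᵀ * C)
    (hBD : (Bᵀ * D)ᵀ = Bᵀ * D)
    (hΩ : Ωᵀ = Ω)
    (hM : Invertible (C * Ω + D)) :
    ((C * Ω + D)⁻¹ * C)ᵀ = (C * Ω + D)⁻¹ * C := by
  set M := C * Ω + D with hMdef
  have hCD : C * Dᵀ = D * Cᵀ := CD_symm A B C D h1 hAC hBD
  have hMT : Invertible Mᵀ := Matrix.invertibleTranspose M
  have key : M * Cᵀ = C * Mᵀ := by
    simp only [hMdef, transpose_add, transpose_mul, hΩ]
    rw [add_mul, mul_add, hCD, mul_assoc]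
  calc (M⁻¹ * C)ᵀ = Cᵀ * (Mᵀ)⁻¹ := by rw [transpose_mul, transpose_nonsing_inv]
    _ = M⁻¹ * (M * Cᵀ) * (Mᵀ)⁻¹ := by rw [← mul_assoc, inv_mul_of_invertible, one_mul]
    _ = M⁻¹ * (C * Mᵀ) * (Mᵀ)⁻¹ := by rw [key]
    _ = M⁻¹ * C := by rw [mul_assoc M⁻¹, mul_assoc, mul_inv_of_invertible, mul_one]
end

section
/- Let A, B, C, D be complex g×g matrices forming a symplectic block matrix (Aᵀ·D − Cᵀ·B = I, Aᵀ·C and Bᵀ·D symmetric), and let Ω be a symmetric complex g×g matrix with C·Ω + D invertible. Then the transformed period matrix Ω̃ := (A·Ω + B)·(C·Ω + D)⁻¹ is symmetric. -/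
open Matrix

/-- For a symplectic block matrix (`Aᵀ·D − Cᵀ·B = 1`, `Aᵀ·C` and `Bᵀ·D` symmetric)
and a symmetric `Ω` with `C·Ω + D` invertible, the transformed period matrix
`Ω̃ = (A·Ω + B)·(C·Ω + D)⁻¹` is symmetric. -/
theorem Omega_tilde_symmetric {g : ℕ}
    (A B C D Ω : Matrix (Fin g) (Fin g) ℂ)
    (h1 : Aᵀ * D - Cᵀ * B = 1)
    (hAC : (Aᵀ * C)ᵀ = Aᵀ * C)
    (hBD : (Bᵀ * D)ᵀ = Bᵀ * D)
    (hΩ : Ωᵀ = Ω)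
    (hM : Invertible (C * Ω + D)) :
    ((A * Ω + B) * (C * Ω + D)⁻¹)ᵀ = (A * Ω + B) * (C * Ω + D)⁻¹ := by
  have hCA : Cᵀ * A = Aᵀ * C := by
    calc Cᵀ * A = (Aᵀ * C)ᵀ := by rw [transpose_mul, transpose_transpose]
    _ = Aᵀ * C := hAC
  have hDB : Dᵀ * B = Bᵀ * D := by
    calc Dᵀ * B = (Bᵀ * D)ᵀ := by rw [transpose_mul, transpose_transpose]
    _ = Bᵀ * D := hBD
  have hAD : Aᵀ * D = 1 + Cᵀ * B := by
    have := h1; linear_combination (norm := noncomm_ring) this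
  have h1t : Dᵀ * A - Bᵀ * C = 1 := by
    have := congrArg Matrix.transpose h1
    simpa [transpose_sub, transpose_mul, transpose_transpose] using this
  have hDA : Dᵀ * A = 1 + Bᵀ * C := by
    linear_combination (norm := noncomm_ring) h1t
  have key : (A * Ω + B)ᵀ * (C * Ω + D) = (C * Ω + D)ᵀ * (A * Ω + B) := by
    simp only [transpose_add, transpose_mul, hΩ]
    calc (Ω * Aᵀ + Bᵀ) * (C * Ω + D)
        = Ω * (Aᵀ * C) * Ω + Ω * (Aᵀ * D) + Bᵀ * C * Ω + Bᵀ * D := by noncomm_ring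
      _ = Ω * (Cᵀ * A) * Ω + Ω * (Cᵀ * B) + Dᵀ * A * Ω + Dᵀ * B := by
          rw [hCA, hAD, hDA, hDB]; noncomm_ring
      _ = (Ω * Cᵀ + Dᵀ) * (A * Ω + B) := by noncomm_ring
  have hMt : Invertible (C * Ω + D)ᵀ := Matrix.invertibleTranspose (C * Ω + D)
  rw [transpose_mul, transpose_nonsing_inv]
  rw [Matrix.inv_mul_eq_iff_eq_mul_of_invertible, ← Matrix.mul_assoc]
  calc (A * Ω + B)ᵀ = (A * Ω + B)ᵀ * ((C * Ω + D) * (C * Ω + D)⁻¹) := by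
        rw [Matrix.mul_inv_of_invertible, Matrix.mul_one]
    _ = (C * Ω + D)ᵀ * (A * Ω + B) * (C * Ω + D)⁻¹ := by
        rw [← Matrix.mul_assoc, key]
end
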